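/- arXiv:2401.04622 — 2 statements merged into one kernel-verified Lean document; each statement's English description precedes it below -/
import Mathlib

section
/- For all λ₀, a₀, ρ₀ > 0 there exist an integer ℓ₀ ≥ 1 and a constant C > 0 such that for every integer ℓ ≥ ℓ₀ and all λ ∈ (0, λ₀], a ∈ (0, a₀], ρ ∈ (0, ρ₀], one has D_ℓ(λ) > 0 and |F_ℓ(λ)| ≤ C·(ℓ³/((λ²+a²)·λ))·(λρe/(2ℓ))^{2ℓ}. -/
open scoped Real Topology
open Filter Asymptotics

noncomputable def eulerGamma : ℝ := -deriv Real.Gamma 1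

noncomputable def harm (m : ℕ) : ℝ := ∑ j ∈ Finset.range m, (1 : ℝ)/(j+1)

noncomputable def besselJr (ℓ : ℕ) (x : ℝ) : ℝ :=
  ∑' k : ℕ, ((-1 : ℝ)^k / ((Nat.factorial k : ℝ) * (Nat.factorial (k + ℓ) : ℝ))) * (x/2)^(2*k + ℓ)

noncomputable def besselYr (ℓ : ℕ) (x : ℝ) : ℝ :=
  (2/Real.pi) * (Real.log (x/2) + eulerGamma) * besselJr ℓ x
  - (1/Real.pi) * ∑ k ∈ Finset.range ℓ,
      ((Nat.factorial (ℓ - k - 1) : ℝ) / (Nat.factorial k : ℝ)) * (x/2)^(2*(k:ℤ) - (ℓ:ℤ))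
  - (1/Real.pi) * ∑' k : ℕ,
      ((-1:ℝ)^k * (harm k + harm (k+ℓ)) / ((Nat.factorial k : ℝ) * (Nat.factorial (k+ℓ) : ℝ))) * (x/2)^(2*k+ℓ)

noncomputable def besselJn (ℓ : ℕ) (z : ℂ) : ℂ :=
  ∑' k : ℕ, ((-1 : ℂ)^k / ((Nat.factorial k : ℂ) * (Nat.factorial (k + ℓ) : ℂ))) * (z/2)^(2*k + ℓ)

noncomputable def besselJZ (ℓ : ℤ) (z : ℂ) : ℂ :=
  if 0 ≤ ℓ then besselJn ℓ.toNat z else (-1 : ℂ)^((-ℓ).toNat) * besselJn (-ℓ).toNat z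

noncomputable def besselYn (ℓ : ℕ) (z : ℂ) : ℂ :=
  (2/(Real.pi : ℂ)) * (Complex.log (z/2) + (eulerGamma : ℂ)) * besselJn ℓ z
  - (1/(Real.pi : ℂ)) * ∑ k ∈ Finset.range ℓ,
      ((Nat.factorial (ℓ - k - 1) : ℂ) / (Nat.factorial k : ℂ)) * (z/2)^(2*(k:ℤ) - (ℓ:ℤ))
  - (1/(Real.pi : ℂ)) * ∑' k : ℕ,
      ((-1:ℂ)^k * ((harm k : ℝ) + (harm (k+ℓ) : ℝ)) / ((Nat.factorial k : ℂ) * (Nat.factorial (k+ℓ) : ℂ))) * (z/2)^(2*k+ℓ)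

noncomputable def besselYZ (ℓ : ℤ) (z : ℂ) : ℂ :=
  if 0 ≤ ℓ then besselYn ℓ.toNat z else (-1 : ℂ)^((-ℓ).toNat) * besselYn (-ℓ).toNat z

noncomputable def hankelH1 (ℓ : ℤ) (z : ℂ) : ℂ := besselJZ ℓ z + Complex.I * besselYZ ℓ z

noncomputable def hankelH1n (ℓ : ℕ) (z : ℂ) : ℂ := besselJn ℓ z + Complex.I * besselYn ℓ z
noncomputable def hankelH2n (ℓ : ℕ) (z : ℂ) : ℂ := besselJn ℓ z - Complex.I * besselYn ℓ z

noncomputable def muC (a : ℝ) (lam : ℂ) : ℂ := (lam^2 + (a:ℂ)^2) ^ ((1:ℂ)/2)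

noncomputable def Qfun (ρ : ℝ) (ℓ : ℤ) (lam : ℂ) (a : ℝ) : ℂ :=
  muC a lam * besselJZ (ℓ-1) ((ρ:ℂ) * muC a lam) * hankelH1 ℓ (lam * (ρ:ℂ))
  - lam * besselJZ ℓ ((ρ:ℂ) * muC a lam) * hankelH1 (ℓ-1) (lam * (ρ:ℂ))

noncomputable def Dfun (a ρ : ℝ) (ℓ : ℕ) (lam : ℝ) : ℝ :=
  (Real.sqrt (lam^2+a^2) * besselJr (ℓ-1) (Real.sqrt (lam^2+a^2)*ρ) * besselJr ℓ (lam*ρ)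
    - lam * besselJr ℓ (Real.sqrt (lam^2+a^2)*ρ) * besselJr (ℓ-1) (lam*ρ))^2
  + (Real.sqrt (lam^2+a^2) * besselJr (ℓ-1) (Real.sqrt (lam^2+a^2)*ρ) * besselYr ℓ (lam*ρ)
    - lam * besselJr ℓ (Real.sqrt (lam^2+a^2)*ρ) * besselYr (ℓ-1) (lam*ρ))^2

noncomputable def Ffun (a ρ : ℝ) (ℓ : ℕ) (lam : ℝ) : ℝ :=
  (2*a^2/(Real.pi^2*lam)) * besselJr (ℓ-1) (Real.sqrt (lam^2+a^2)*ρ)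
    * besselJr (ℓ+1) (Real.sqrt (lam^2+a^2)*ρ) / Dfun a ρ ℓ lam

noncomputable def D0fun (a ρ : ℝ) (lam : ℝ) : ℝ :=
  (Real.sqrt (lam^2+a^2) * besselJr 1 (Real.sqrt (lam^2+a^2)*ρ) * besselJr 0 (lam*ρ)
    - lam * besselJr 0 (Real.sqrt (lam^2+a^2)*ρ) * besselJr 1 (lam*ρ))^2
  + (Real.sqrt (lam^2+a^2) * besselJr 1 (Real.sqrt (lam^2+a^2)*ρ) * besselYr 0 (lam*ρ)
    - lam * besselJr 0 (Real.sqrt (lam^2+a^2)*ρ) * besselYr 1 (lam*ρ))^2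

noncomputable def F0fun (a ρ : ℝ) (lam : ℝ) : ℝ :=
  -(2*a^2/(Real.pi^2*lam)) * (besselJr 1 (Real.sqrt (lam^2+a^2)*ρ))^2 / D0fun a ρ lam


/-!
For `λ ≤ λ₀`, `a ≤ a₀`, `ρ ≤ ρ₀` the arguments `x = λρ` and `y = μρ` stay in `[0, M]`, so for
large order the Bessel functions are controlled by their leading terms uniformly in the
parameters: `J_m(y)` lies within a factor `3/2` of `(y/2)^m / m!`, because the tail of its series
is dominated by a geometric series of ratio `(y/2)² / (m + 1) ≤ 1/3`; and `-π Y_{m+1}(x)` lies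
within a factor `2` of `m! / (x/2)^(m+1)`, because the principal part dominates while the
logarithmic and series parts are `O((x/2)^(m+1) / (m+1)!)`, which is eventually negligible.

Keeping only the second square of `D_ℓ`, its bracket is then at least
`μ (y/2)^(ℓ-1) / (8π (x/2)^ℓ)` once `24 (y/2)(x/2) ≤ ℓ(ℓ-1)`. This gives `D_ℓ > 0` and
`F_ℓ ≤ 288 a² (y/2)² (x/2)^(2ℓ) / (λ μ² (ℓ-1)! (ℓ+1)!)`, and `ℓ^ℓ ≤ e^ℓ ℓ!` turns the factorials
into the factor `ℓ³ (e / ℓ)^(2ℓ)`.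
-/

open scoped Nat
open Set

lemma abs_tsum_le_of_abs_le_geometric {f : ℕ → ℝ} {A r : ℝ} (hr₀ : 0 ≤ r) (hr₁ : r < 1)
    (hf : ∀ k, |f k| ≤ A * r ^ k) : |∑' k, f k| ≤ A / (1 - r) := by
  rw [div_eq_mul_inv]
  exact tsum_of_norm_bounded (f := f) ((hasSum_geometric_of_lt_one hr₀ hr₁).mul_left A) hf

lemma pow_le_factorial_mul_descFactorial {n k : ℕ} (hk : k ≤ n) :
    n ^ k ≤ k ! * n.descFactorial k := by
  induction k with
  | zero => simp
  | succ k ih =>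
    have hn : n ≤ (k + 1) * (n - k) := by
      obtain ⟨d, rfl⟩ : ∃ d, n = k + 1 + d := ⟨n - (k + 1), by omega⟩
      rw [show k + 1 + d - k = d + 1 by omega]; nlinarith
    calc n ^ (k + 1) = n ^ k * n := pow_succ n k
      _ ≤ (k ! * n.descFactorial k) * ((k + 1) * (n - k)) := Nat.mul_le_mul (ih (by omega)) hn
      _ = (k + 1)! * n.descFactorial (k + 1) := by
        rw [Nat.descFactorial_succ, Nat.factorial_succ]; ring

lemma pow_mul_factorial_sub_le {n k : ℕ} (hk : k ≤ n) : n ^ k * (n - k)! ≤ n ! * k ! := by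
  calc n ^ k * (n - k)! ≤ k ! * n.descFactorial k * (n - k)! :=
        Nat.mul_le_mul_right _ (pow_le_factorial_mul_descFactorial hk)
    _ = n ! * k ! := by rw [← Nat.factorial_mul_descFactorial hk]; ring

lemma pow_le_exp_mul_factorial_mul_factorial (n : ℕ) :
    ((n : ℝ) + 1) ^ (2 * (n + 1)) ≤ (n + 1) * Real.exp 1 ^ (2 * (n + 1)) * (n ! * (n + 2)!) := by
  have hexp : ((n : ℝ) + 1) ^ (n + 1) ≤ Real.exp 1 ^ (n + 1) * (n + 1)! := by
    have := Real.pow_div_factorial_le_exp (x := (n : ℝ) + 1) (by positivity) (n + 1)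
    rw [div_le_iff₀ (by positivity)] at this
    rw [Real.exp_one_pow]; push_cast; exact this
  have hfac : ((n + 1)! : ℝ) ^ 2 ≤ (n + 1) * (n ! * (n + 2)!) := by
    have : ((n + 1)! : ℝ) ≤ (n + 2)! := by exact_mod_cast Nat.factorial_le (by omega)
    calc ((n + 1)! : ℝ) ^ 2 = (n + 1) * n ! * (n + 1)! := by push_cast [Nat.factorial_succ]; ring
      _ ≤ (n + 1) * n ! * (n + 2)! := by gcongr
      _ = _ := by ring
  calc ((n : ℝ) + 1) ^ (2 * (n + 1)) = (((n : ℝ) + 1) ^ (n + 1)) ^ 2 := by ring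
    _ ≤ (Real.exp 1 ^ (n + 1) * (n + 1)!) ^ 2 := by gcongr
    _ = Real.exp 1 ^ (2 * (n + 1)) * ((n + 1)! : ℝ) ^ 2 := by ring
    _ ≤ Real.exp 1 ^ (2 * (n + 1)) * ((n + 1) * (n ! * (n + 2)!)) := by gcongr
    _ = _ := by ring

lemma harm_nonneg (m : ℕ) : 0 ≤ harm m :=
  Finset.sum_nonneg fun j _ => by positivity

lemma harm_le (m : ℕ) : harm m ≤ m := by
  calc harm m ≤ ∑ _j ∈ Finset.range m, (1 : ℝ) :=
        Finset.sum_le_sum fun j _ => by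
          rw [div_le_one (by positivity)]; linarith [j.cast_nonneg (α := ℝ)]
    _ = m := by simp

lemma pow_succ_mul_abs_log_le {q K : ℝ} (n : ℕ) (hq : 0 < q) (hqK : q ≤ K) (hK : 1 ≤ K) :
    q ^ (n + 1) * |Real.log q| ≤ K ^ (n + 2) := by
  rcases le_total q 1 with hq1 | hq1
  · calc q ^ (n + 1) * |Real.log q| = q ^ n * |Real.log q * q| := by
          rw [abs_mul, abs_of_pos hq]; ring
      _ ≤ 1 * 1 := mul_le_mul (pow_le_one₀ hq.le hq1) (Real.abs_log_mul_self_lt q hq hq1).le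
          (abs_nonneg _) zero_le_one
      _ ≤ K ^ (n + 2) := by rw [one_mul]; exact one_le_pow₀ hK
  · calc q ^ (n + 1) * |Real.log q| ≤ q ^ (n + 1) * q := by
          rw [abs_of_nonneg (Real.log_nonneg hq1)]; gcongr; exact Real.log_le_self hq.le
      _ = q ^ (n + 2) := by ring
      _ ≤ K ^ (n + 2) := by gcongr

noncomputable def besselJTerm (m : ℕ) (x : ℝ) (k : ℕ) : ℝ :=
  ((-1 : ℝ) ^ k / ((k ! : ℝ) * ((k + m)! : ℝ))) * (x / 2) ^ (2 * k + m)

lemma besselJr_eq_tsum (m : ℕ) (x : ℝ) : besselJr m x = ∑' k, besselJTerm m x k := rfl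

lemma abs_besselJTerm_le {m : ℕ} {x : ℝ} (h : 3 * (x / 2) ^ 2 ≤ m + 1) (k : ℕ) :
    |besselJTerm m x k| ≤ |x / 2| ^ m / m ! * (1 / 3) ^ k := by
  have hfac : (m ! : ℝ) * (m + 1) ^ k ≤ k ! * (k + m)! := by
    calc (m ! : ℝ) * (m + 1) ^ k ≤ (m + k)! := by
          exact_mod_cast Nat.factorial_mul_pow_le_factorial
      _ ≤ k ! * (k + m)! := by
          rw [add_comm]
          exact le_mul_of_one_le_left (by positivity) (by exact_mod_cast k.factorial_pos)
  have hr : (x / 2) ^ 2 / (m + 1) ≤ 1 / 3 := by rw [div_le_iff₀ (by positivity)]; linarith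
  rw [besselJTerm, abs_mul, abs_div, abs_pow, abs_neg, abs_one, one_pow, abs_pow,
    abs_of_pos (by positivity : (0 : ℝ) < k ! * (k + m)!)]
  calc 1 / (k ! * (k + m)! : ℝ) * |x / 2| ^ (2 * k + m)
      ≤ 1 / (m ! * (m + 1) ^ k) * |x / 2| ^ (2 * k + m) := by gcongr
    _ = |x / 2| ^ m / m ! * ((x / 2) ^ 2 / (m + 1)) ^ k := by
        rw [pow_add, pow_mul, sq_abs, div_pow]; ring
    _ ≤ |x / 2| ^ m / m ! * (1 / 3) ^ k := by gcongr

lemma abs_besselJr_sub_le {m : ℕ} {x : ℝ} (h : 3 * (x / 2) ^ 2 ≤ m + 1) :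
    |besselJr m x - (x / 2) ^ m / m !| ≤ |x / 2| ^ m / m ! / 2 := by
  set A := |x / 2| ^ m / (m ! : ℝ)
  have hterm := abs_besselJTerm_le h
  have hsum : Summable (besselJTerm m x) :=
    .of_norm_bounded ((summable_geometric_of_lt_one (by norm_num) (by norm_num)).mul_left A) hterm
  have htail : |∑' k, besselJTerm m x (k + 1)| ≤ A / 3 / (1 - 1 / 3) :=
    abs_tsum_le_of_abs_le_geometric (by norm_num) (by norm_num) fun k =>
      (hterm (k + 1)).trans_eq (by ring)
  have hhead : besselJTerm m x 0 = (x / 2) ^ m / m ! := by simp [besselJTerm, div_eq_inv_mul]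
  rw [besselJr_eq_tsum, hsum.tsum_eq_zero_add, hhead, add_sub_cancel_left]
  exact htail.trans_eq (by ring)

lemma besselJr_mem_Icc {m : ℕ} {x : ℝ} (hx : 0 ≤ x) (h : 3 * (x / 2) ^ 2 ≤ m + 1) :
    besselJr m x ∈ Icc ((x / 2) ^ m / m ! / 2) (3 / 2 * ((x / 2) ^ m / m !)) := by
  have := abs_le.mp (abs_besselJr_sub_le h)
  rw [abs_of_nonneg (by positivity : 0 ≤ x / 2)] at this
  constructor <;> linarith [this.1, this.2]

lemma eventually_besselJr_mem_Icc (M : ℝ) :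
    ∀ᶠ m : ℕ in atTop, ∀ x ∈ Icc 0 M,
      besselJr m x ∈ Icc ((x / 2) ^ m / m ! / 2) (3 / 2 * ((x / 2) ^ m / m !)) := by
  filter_upwards [eventually_ge_atTop ⌈3 * (M / 2) ^ 2⌉₊] with m hm x hx
  refine besselJr_mem_Icc hx.1 ?_
  have hxM : (x / 2) ^ 2 ≤ (M / 2) ^ 2 := by gcongr; exacts [by linarith [hx.1], hx.2]
  linarith [Nat.ceil_le.mp hm]

noncomputable def besselYPrincipalPart (m : ℕ) (x : ℝ) : ℝ :=
  ∑ k ∈ Finset.range m, ((m - k - 1)! / k ! : ℝ) * (x / 2) ^ (2 * (k : ℤ) - (m : ℤ))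

noncomputable def besselYSeries (m : ℕ) (x : ℝ) : ℝ :=
  ∑' k : ℕ, ((-1 : ℝ) ^ k * (harm k + harm (k + m)) / ((k ! : ℝ) * ((k + m)! : ℝ)))
    * (x / 2) ^ (2 * k + m)

lemma besselYr_eq (m : ℕ) (x : ℝ) :
    besselYr m x = 2 / π * (Real.log (x / 2) + eulerGamma) * besselJr m x
      - 1 / π * besselYPrincipalPart m x - 1 / π * besselYSeries m x := rfl

lemma le_besselYPrincipalPart_succ {m : ℕ} {x : ℝ} (hx : 0 < x) :
    m ! / (x / 2) ^ (m + 1) ≤ besselYPrincipalPart (m + 1) x := by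
  refine le_of_eq_of_le ?_
    (Finset.single_le_sum (fun k _ => by positivity) (Finset.mem_range.2 m.succ_pos))
  simp only [Nat.cast_zero, mul_zero, zero_sub, zpow_neg, zpow_natCast, Nat.factorial_zero,
    Nat.cast_one, inv_one, mul_one, Nat.sub_zero, Nat.add_sub_cancel, div_eq_mul_inv]

lemma besselYPrincipalPart_succ_le {m : ℕ} {x : ℝ} (hx : 0 < x) (h : 3 * (x / 2) ^ 2 ≤ m) :
    besselYPrincipalPart (m + 1) x ≤ 3 / 2 * (m ! / (x / 2) ^ (m + 1)) := by
  set q := x / 2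
  set F := (m ! : ℝ) / q ^ (m + 1)
  have hq : 0 < q := by positivity
  have hm : (0 : ℝ) < m := by nlinarith
  have hr : q ^ 2 / m ≤ 1 / 3 := by rw [div_le_iff₀ hm]; linarith
  have hterm : ∀ k ∈ Finset.range (m + 1),
      ((m + 1 - k - 1)! / k ! : ℝ) * q ^ (2 * (k : ℤ) - ((m + 1 : ℕ) : ℤ)) ≤ F * (1 / 3) ^ k := by
    intro k hk
    have hkm : k ≤ m := Nat.lt_succ_iff.mp (Finset.mem_range.mp hk)
    have hfac : ((m - k)! : ℝ) * m ^ k / k ! ≤ m ! := by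
      rw [div_le_iff₀ (by positivity), mul_comm]; exact_mod_cast pow_mul_factorial_sub_le hkm
    calc ((m + 1 - k - 1)! / k ! : ℝ) * q ^ (2 * (k : ℤ) - ((m + 1 : ℕ) : ℤ))
        = ((m - k)! * m ^ k / k ! : ℝ) * ((q ^ 2 / m) ^ k / q ^ (m + 1)) := by
          rw [show m + 1 - k - 1 = m - k by omega, zpow_sub₀ hq.ne', zpow_natCast,
            zpow_mul, zpow_natCast, div_pow (q ^ 2) (m : ℝ) k]
          field_simp
      _ ≤ m ! * ((1 / 3) ^ k / q ^ (m + 1)) := by gcongr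
      _ = F * (1 / 3) ^ k := by ring
  calc besselYPrincipalPart (m + 1) x ≤ ∑ k ∈ Finset.range (m + 1), F * (1 / 3) ^ k :=
        Finset.sum_le_sum hterm
    _ ≤ F * (1 - 1 / 3)⁻¹ := by
        rw [← Finset.mul_sum, Finset.range_eq_Ico]
        gcongr
        exact (geom_sum_Ico_le_of_lt_one (by norm_num) (by norm_num)).trans_eq (by norm_num)
    _ = 3 / 2 * F := by ring

lemma abs_besselYSeries_le {m : ℕ} {x : ℝ} (hm : 1 ≤ m) (h : 3 * (x / 2) ^ 2 ≤ m + 1) :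
    |besselYSeries m x| ≤ 6 * m * (|x / 2| ^ m / m !) := by
  set A := |x / 2| ^ m / (m ! : ℝ)
  have hterm (k : ℕ) :
      |(-1 : ℝ) ^ k * (harm k + harm (k + m)) / (k ! * (k + m)!) * (x / 2) ^ (2 * k + m)|
        ≤ 2 * m * A * (2 / 3) ^ k := by
    have hm' : (1 : ℝ) ≤ m := by exact_mod_cast hm
    have h2k : (k : ℝ) + 1 ≤ 2 ^ k := by exact_mod_cast Nat.lt_two_pow_self
    have hH : harm k + harm (k + m) ≤ 2 * m * 2 ^ k := by
      have := harm_le k; have := harm_le (k + m); push_cast at *; nlinarith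
    calc |(-1 : ℝ) ^ k * (harm k + harm (k + m)) / (k ! * (k + m)!) * (x / 2) ^ (2 * k + m)|
        = |(harm k + harm (k + m)) * besselJTerm m x k| := by rw [besselJTerm]; congr 1; ring
      _ = (harm k + harm (k + m)) * |besselJTerm m x k| := by
          rw [abs_mul, abs_of_nonneg (add_nonneg (harm_nonneg k) (harm_nonneg (k + m)))]
      _ ≤ (2 * m * 2 ^ k) * (A * (1 / 3) ^ k) :=
          mul_le_mul hH (abs_besselJTerm_le h k) (abs_nonneg _) (by positivity)
      _ = 2 * m * A * (2 / 3) ^ k := by rw [div_pow, div_pow]; ring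
  calc |besselYSeries m x| ≤ 2 * m * A / (1 - 2 / 3) :=
        abs_tsum_le_of_abs_le_geometric (by norm_num) (by norm_num) hterm
    _ = 6 * m * A := by ring

lemma abs_besselYSeries_sub_le {m : ℕ} {x : ℝ} (hm : 1 ≤ m) (h : 3 * (x / 2) ^ 2 ≤ m + 1) :
    |besselYSeries m x - 2 * (Real.log (x / 2) + eulerGamma) * besselJr m x|
      ≤ |x / 2| ^ m / m ! * (6 * m + 3 * |Real.log (x / 2)| + 3 * |eulerGamma|) := by
  set A := |x / 2| ^ m / (m ! : ℝ)
  have hJ : |besselJr m x| ≤ 3 / 2 * A := by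
    have hlead : |(x / 2) ^ m / (m ! : ℝ)| = A := by rw [abs_div, abs_pow, Nat.abs_cast]
    have := abs_sub_abs_le_abs_sub (besselJr m x) ((x / 2) ^ m / m !)
    linarith [abs_besselJr_sub_le h]
  calc |besselYSeries m x - 2 * (Real.log (x / 2) + eulerGamma) * besselJr m x|
      ≤ |besselYSeries m x| + 2 * (|Real.log (x / 2)| + |eulerGamma|) * |besselJr m x| := by
        refine (abs_sub _ _).trans ?_
        gcongr
        rw [abs_mul, abs_mul, abs_two]
        gcongr
        exact abs_add_le _ _
    _ ≤ 6 * m * A + 2 * (|Real.log (x / 2)| + |eulerGamma|) * (3 / 2 * A) := by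
        gcongr
        exact abs_besselYSeries_le hm h
    _ = A * (6 * m + 3 * |Real.log (x / 2)| + 3 * |eulerGamma|) := by ring

lemma neg_besselYr_succ_mem_Icc {m : ℕ} {x : ℝ} (hx : 0 < x) (h : 3 * (x / 2) ^ 2 ≤ m)
    (hR : |besselYSeries (m + 1) x - 2 * (Real.log (x / 2) + eulerGamma) * besselJr (m + 1) x|
      ≤ m ! / (x / 2) ^ (m + 1) / 2) :
    -besselYr (m + 1) x
      ∈ Icc (m ! / (x / 2) ^ (m + 1) / (2 * π)) (2 / π * (m ! / (x / 2) ^ (m + 1))) := by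
  set F := (m ! : ℝ) / (x / 2) ^ (m + 1)
  have hP := le_besselYPrincipalPart_succ (m := m) hx
  have hP' := besselYPrincipalPart_succ_le hx h
  have hR' := abs_le.mp hR
  have hY : -besselYr (m + 1) x = (besselYPrincipalPart (m + 1) x + (besselYSeries (m + 1) x
      - 2 * (Real.log (x / 2) + eulerGamma) * besselJr (m + 1) x)) / π := by
    rw [besselYr_eq]; ring
  rw [hY]
  constructor
  · rw [show F / (2 * π) = F / 2 / π by ring, div_le_div_iff_of_pos_right Real.pi_pos]; linarith
  · rw [show 2 / π * F = 2 * F / π by ring, div_le_div_iff_of_pos_right Real.pi_pos]; linarith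

-- With `q = x/2` and `g = |γ|`, the left side bounds the remainder in `neg_besselYr_succ_mem_Icc`.
lemma pow_div_factorial_mul_le_factorial_div_pow {m : ℕ} {q K g : ℝ} (hq : 0 < q)
    (hqK : q ≤ K) (hK : 1 ≤ K) (hg : 0 ≤ g)
    (hsmall : 2 * (9 + 3 * g) * K ^ 3 * (K ^ 2) ^ m ≤ m !) :
    q ^ (m + 1) / (m + 1)! * (6 * ((m + 1 : ℕ) : ℝ) + 3 * |Real.log q| + 3 * g)
      ≤ m ! / q ^ (m + 1) / 2 := by
  have hlog := pow_succ_mul_abs_log_le (2 * m + 1) hq hqK hK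
  have hpow : q ^ (2 * m + 2) ≤ K ^ (2 * m + 3) :=
    (pow_le_pow_left₀ hq.le hqK _).trans (pow_le_pow_right₀ hK (by omega))
  have hfac : (1 : ℝ) ≤ m ! := by exact_mod_cast m.factorial_pos
  have key : q ^ (2 * m + 2) * (6 * (m + 1) + 3 * |Real.log q| + 3 * g)
      ≤ (m + 1) * m ! * m ! / 2 :=
    calc q ^ (2 * m + 2) * (6 * (m + 1) + 3 * |Real.log q| + 3 * g)
        = 6 * (m + 1) * q ^ (2 * m + 2) + 3 * (q ^ (2 * m + 2) * |Real.log q|)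
          + 3 * g * q ^ (2 * m + 2) := by ring
      _ ≤ 6 * (m + 1) * K ^ (2 * m + 3) + 3 * K ^ (2 * m + 3) + 3 * g * K ^ (2 * m + 3) := by
          gcongr
      _ ≤ (m + 1) * ((9 + 3 * g) * K ^ 3 * (K ^ 2) ^ m) := by
          have : (0 : ℝ) ≤ K ^ (2 * m + 3) := by positivity
          rw [mul_assoc (9 + 3 * g), show K ^ 3 * (K ^ 2) ^ m = K ^ (2 * m + 3) by ring]
          nlinarith [mul_nonneg (mul_nonneg m.cast_nonneg (by linarith : (0 : ℝ) ≤ 3 + 3 * g)) this]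
      _ ≤ (m + 1) * (m ! / 2) := by gcongr; linarith
      _ ≤ (m + 1) * m ! * m ! / 2 := by
          rw [mul_div_assoc, mul_assoc]; gcongr; exact le_mul_of_one_le_left (by positivity) hfac
  rw [Nat.factorial_succ, div_mul_eq_mul_div, div_div, div_le_div_iff₀ (by positivity)
    (by positivity)]
  push_cast
  calc q ^ (m + 1) * (6 * (m + 1) + 3 * |Real.log q| + 3 * g) * (q ^ (m + 1) * 2)
      = 2 * (q ^ (2 * m + 2) * (6 * (m + 1) + 3 * |Real.log q| + 3 * g)) := by ring
    _ ≤ 2 * ((m + 1) * m ! * m ! / 2) := by gcongr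
    _ = m ! * ((m + 1) * m !) := by ring

lemma eventually_neg_besselYr_succ_mem_Icc (M : ℝ) :
    ∀ᶠ m : ℕ in atTop, ∀ x ∈ Ioc 0 M, -besselYr (m + 1) x
      ∈ Icc (m ! / (x / 2) ^ (m + 1) / (2 * π)) (2 / π * (m ! / (x / 2) ^ (m + 1))) := by
  set K := max 1 (M / 2)
  set g := |eulerGamma|
  have hK : 1 ≤ K := le_max_left _ _
  have hsmall : ∀ᶠ m : ℕ in atTop, 2 * (9 + 3 * g) * K ^ 3 * (K ^ 2) ^ m ≤ m ! := by
    have hc : 0 < 2 * (9 + 3 * g) * K ^ 3 := by positivity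
    filter_upwards [(FloorSemiring.tendsto_pow_div_factorial_atTop (K ^ 2)).eventually
      (ge_mem_nhds (inv_pos.mpr hc))] with m hm
    rwa [div_le_iff₀ (by positivity), inv_mul_eq_div, le_div_iff₀' hc] at hm
  filter_upwards [eventually_ge_atTop ⌈3 * (M / 2) ^ 2⌉₊, hsmall] with m hm hsm x hx
  have hq : 0 < x / 2 := by linarith [hx.1]
  have hqM : x / 2 ≤ M / 2 := by linarith [hx.2]
  have h : 3 * (x / 2) ^ 2 ≤ m :=
    (by gcongr : 3 * (x / 2) ^ 2 ≤ 3 * (M / 2) ^ 2).trans (Nat.ceil_le.mp hm)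
  refine neg_besselYr_succ_mem_Icc hx.1 h ?_
  refine (abs_besselYSeries_sub_le (by omega) (by push_cast; linarith)).trans ?_
  rw [abs_of_pos hq]
  exact pow_div_factorial_mul_le_factorial_div_pow hq (hqM.trans (le_max_right _ _)) hK
    (abs_nonneg _) hsm

lemma le_besselY_bracket {n : ℕ} {lam μ x y : ℝ} (hlam : 0 ≤ lam) (hlamμ : lam ≤ μ)
    (hx : 0 < x) (hy : 0 ≤ y)
    (hJ₁ : (y / 2) ^ (n + 1) / (n + 1)! / 2 ≤ besselJr (n + 1) y)
    (hJ₂ : besselJr (n + 2) y ≤ 3 / 2 * ((y / 2) ^ (n + 2) / (n + 2)!))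
    (hY₂ : (n + 1)! / (x / 2) ^ (n + 2) / (2 * π) ≤ -besselYr (n + 2) x)
    (hY₁ : -besselYr (n + 1) x
      ∈ Icc (n ! / (x / 2) ^ (n + 1) / (2 * π)) (2 / π * (n ! / (x / 2) ^ (n + 1))))
    (h24 : 24 * (y / 2) * (x / 2) ≤ (n + 1) * (n + 2)) :
    μ * (y / 2) ^ (n + 1) / (8 * π * (x / 2) ^ (n + 2))
      ≤ lam * besselJr (n + 2) y * besselYr (n + 1) x
        - μ * besselJr (n + 1) y * besselYr (n + 2) x := by
  set p := y / 2
  set q := x / 2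
  have hp : 0 ≤ p := by positivity
  have hq : 0 < q := by positivity
  have hμ : 0 ≤ μ := hlam.trans hlamμ
  have hπ := Real.pi_pos
  set W := p ^ (n + 1) / q ^ (n + 2) with hWdef
  have hW : 0 ≤ W := by positivity
  have hJ₁0 : 0 ≤ besselJr (n + 1) y := (by positivity : (0 : ℝ) ≤ _).trans hJ₁
  have hY₁0 : 0 ≤ -besselYr (n + 1) x := (by positivity : (0 : ℝ) ≤ _).trans hY₁.1
  have hmain : μ * W / (4 * π) ≤ μ * besselJr (n + 1) y * -besselYr (n + 2) x :=
    calc μ * W / (4 * π)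
        = μ * (p ^ (n + 1) / (n + 1)! / 2) * ((n + 1)! / q ^ (n + 2) / (2 * π)) := by
          rw [hWdef]; field_simp; ring
      _ ≤ μ * besselJr (n + 1) y * -besselYr (n + 2) x := by gcongr
  have hcorr : lam * besselJr (n + 2) y * -besselYr (n + 1) x ≤ μ * W / (8 * π) :=
    calc lam * besselJr (n + 2) y * -besselYr (n + 1) x
        ≤ lam * (3 / 2 * (p ^ (n + 2) / (n + 2)!)) * (2 / π * (n ! / q ^ (n + 1))) := by
          gcongr
          exact hY₁.2
      _ = lam * W / (8 * π) * (24 * p * q / ((n + 1) * (n + 2))) := by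
          rw [hWdef]; push_cast [Nat.factorial_succ]; field_simp; ring
      _ ≤ μ * W / (8 * π) * 1 := by
          gcongr; rw [div_le_one (by positivity)]; exact h24
      _ = μ * W / (8 * π) := mul_one _
  have hW8 : μ * W / (8 * π) = μ * W / (4 * π) - μ * W / (8 * π) := by field_simp; ring
  calc μ * p ^ (n + 1) / (8 * π * q ^ (n + 2)) = μ * W / (8 * π) := by
        rw [hWdef]; field_simp
    _ ≤ _ := by linarith

-- Writing the order as `ℓ = n + 2` makes `ℓ - 1 = n + 1` definitional: no truncated subtraction
-- remains in the orders.
lemma Dfun_pos_and_abs_Ffun_le {n : ℕ} {lam a ρ x y : ℝ} (hlam : 0 < lam) (hρ : 0 < ρ)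
    (hx : x = lam * ρ) (hy : y = √(lam ^ 2 + a ^ 2) * ρ)
    (hJ : ∀ m ∈ Icc (n + 1) (n + 3),
      besselJr m y ∈ Icc ((y / 2) ^ m / m ! / 2) (3 / 2 * ((y / 2) ^ m / m !)))
    (hY : ∀ m ∈ Icc n (n + 1), -besselYr (m + 1) x
      ∈ Icc (m ! / (x / 2) ^ (m + 1) / (2 * π)) (2 / π * (m ! / (x / 2) ^ (m + 1))))
    (h24 : 24 * (y / 2) * (x / 2) ≤ (n + 1) * (n + 2)) :
    0 < Dfun a ρ (n + 2) lam ∧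
      |Ffun a ρ (n + 2) lam| ≤ 288 * a ^ 2 * (y / 2) ^ 2
        * (((n + 2 : ℕ) : ℝ) ^ 3 / ((lam ^ 2 + a ^ 2) * lam))
        * (lam * ρ * Real.exp 1 / (2 * (n + 2 : ℕ))) ^ (2 * (n + 2)) := by
  set μ := √(lam ^ 2 + a ^ 2)
  have hμ2 : μ ^ 2 = lam ^ 2 + a ^ 2 := Real.sq_sqrt (by positivity)
  have hlamμ : lam ≤ μ := Real.le_sqrt_of_sq_le (by nlinarith)
  have hμ : 0 < μ := hlam.trans_le hlamμ
  have hx0 : 0 < x := hx ▸ by positivity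
  have hy0 : 0 < y := hy ▸ by positivity
  obtain ⟨hJ₁, hJ₁'⟩ := hJ (n + 1) ⟨le_rfl, by omega⟩
  have hJ₂ := (hJ (n + 2) ⟨by omega, by omega⟩).2
  obtain ⟨hJ₃, hJ₃'⟩ := hJ (n + 3) ⟨by omega, le_rfl⟩
  have hJ₁0 : 0 ≤ besselJr (n + 1) y := (by positivity : (0 : ℝ) ≤ _).trans hJ₁
  have hJ₃0 : 0 ≤ besselJr (n + 3) y := (by positivity : (0 : ℝ) ≤ _).trans hJ₃
  have hB := le_besselY_bracket hlam.le hlamμ hx0 hy0.le hJ₁ hJ₂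
    (hY (n + 1) ⟨by omega, le_rfl⟩).1 (hY n ⟨le_rfl, by omega⟩) h24
  set W := μ * (y / 2) ^ (n + 1) / (8 * π * (x / 2) ^ (n + 2)) with hWdef
  have hW : 0 < W := by positivity
  have hD : W ^ 2 ≤ Dfun a ρ (n + 2) lam := by
    have h := pow_le_pow_left₀ hW.le hB 2
    rw [Dfun, show n + 2 - 1 = n + 1 from rfl, ← hx, ← hy]
    nlinarith [sq_nonneg (μ * besselJr (n + 1) y * besselJr (n + 2) x
      - lam * besselJr (n + 2) y * besselJr (n + 1) x)]
  have hDpos : 0 < Dfun a ρ (n + 2) lam := (pow_pos hW 2).trans_le hD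
  refine ⟨hDpos, ?_⟩
  have hfac : ((n + 2 : ℕ) : ℝ) ^ (2 * (n + 2))
      ≤ ((n + 2 : ℕ) : ℝ) ^ 3 * Real.exp 1 ^ (2 * (n + 2)) * ((n + 1)! * (n + 3)!) := by
    have h := pow_le_exp_mul_factorial_mul_factorial (n + 1)
    have h3 : ((n + 2 : ℕ) : ℝ) ≤ ((n + 2 : ℕ) : ℝ) ^ 3 :=
      le_self_pow₀ (by exact_mod_cast (by omega : 1 ≤ n + 2)) (by norm_num)
    push_cast at h h3 ⊢
    calc ((n : ℝ) + 2) ^ (2 * (n + 2)) ≤ (n + 1 + 1) * Real.exp 1 ^ (2 * (n + 1 + 1))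
          * ((n + 1)! * (n + 1 + 2)!) := by convert h using 2; ring
      _ ≤ _ := by
          rw [show n + 1 + 2 = n + 3 by ring, show (n : ℝ) + 1 + 1 = n + 2 by ring]; gcongr
  rw [Ffun, show n + 2 - 1 = n + 1 from rfl, ← hy, abs_of_nonneg (by positivity)]
  calc 2 * a ^ 2 / (π ^ 2 * lam) * besselJr (n + 1) y * besselJr (n + 3) y / Dfun a ρ (n + 2) lam
      ≤ 2 * a ^ 2 / (π ^ 2 * lam) * (3 / 2 * ((y / 2) ^ (n + 1) / (n + 1)!))
        * (3 / 2 * ((y / 2) ^ (n + 3) / (n + 3)!)) / W ^ 2 := by gcongr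
    _ = 288 * a ^ 2 * (y / 2) ^ 2 * ((x / 2) ^ (2 * (n + 2)) / ((lam ^ 2 + a ^ 2) * lam))
        / ((n + 1)! * (n + 3)!) := by
        rw [hWdef, ← hμ2]; field_simp; ring
    _ ≤ 288 * a ^ 2 * (y / 2) ^ 2 * ((x / 2) ^ (2 * (n + 2)) / ((lam ^ 2 + a ^ 2) * lam))
        * (((n + 2 : ℕ) : ℝ) ^ 3 * Real.exp 1 ^ (2 * (n + 2))
          / ((n + 2 : ℕ) : ℝ) ^ (2 * (n + 2))) := by
        rw [div_eq_mul_inv]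
        gcongr
        rw [inv_le_iff_one_le_mul₀ (by positivity), div_mul_eq_mul_div,
          one_le_div (by positivity)]
        exact hfac
    _ = _ := by
        have : ((n + 2 : ℕ) : ℝ) ≠ 0 := by positivity
        rw [hx]; simp only [div_pow, mul_pow]; field_simp

/-- uniform large-`ℓ` bound for the phase shift derivatives. -/
theorem stmt_11 (lam₀ a₀ ρ₀ : ℝ) (hlam₀ : 0 < lam₀) (ha₀ : 0 < a₀) (hρ₀ : 0 < ρ₀) :
    ∃ ℓ₀ : ℕ, 1 ≤ ℓ₀ ∧ ∃ C > (0:ℝ), ∀ ℓ : ℕ, ℓ₀ ≤ ℓ →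
      ∀ lam a ρ : ℝ, 0 < lam → lam ≤ lam₀ → 0 < a → a ≤ a₀ → 0 < ρ → ρ ≤ ρ₀ →
        0 < Dfun a ρ ℓ lam ∧
        |Ffun a ρ ℓ lam|
          ≤ C * ((ℓ:ℝ)^3 / ((lam^2 + a^2) * lam)) * (lam*ρ*Real.exp 1/(2*ℓ))^(2*ℓ) := by
  set M := √(lam₀ ^ 2 + a₀ ^ 2) * ρ₀
  obtain ⟨N, hN⟩ := eventually_atTop.mp ((eventually_besselJr_mem_Icc M).and
    ((eventually_neg_besselYr_succ_mem_Icc M).and (eventually_ge_atTop ⌈24 * (M / 2) ^ 2⌉₊)))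
  refine ⟨N + 2, by omega, 288 * a₀ ^ 2 * (M / 2) ^ 2, by positivity, ?_⟩
  intro ℓ hℓ lam a ρ hlam hlam₀' ha ha₀' hρ hρ₀'
  obtain ⟨n, rfl⟩ : ∃ n, ℓ = n + 2 := ⟨ℓ - 2, by omega⟩
  have hyM : √(lam ^ 2 + a ^ 2) * ρ ≤ M := by
    show _ ≤ √(lam₀ ^ 2 + a₀ ^ 2) * ρ₀; gcongr
  have hxM : lam * ρ ≤ M :=
    calc lam * ρ ≤ lam₀ * ρ₀ := by gcongr
      _ ≤ √(lam₀ ^ 2 + a₀ ^ 2) * ρ₀ := by gcongr; exact Real.le_sqrt_of_sq_le (by nlinarith)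
  have h24 : 24 * (√(lam ^ 2 + a ^ 2) * ρ / 2) * (lam * ρ / 2) ≤ (n + 1) * (n + 2) :=
    calc 24 * (√(lam ^ 2 + a ^ 2) * ρ / 2) * (lam * ρ / 2) ≤ 24 * (M / 2) * (M / 2) := by gcongr
      _ ≤ n := by rw [mul_assoc, ← sq]; exact Nat.ceil_le.mp (hN n (by omega)).2.2
      _ ≤ (n + 1) * (n + 2) := by nlinarith
  obtain ⟨hD, hF⟩ := Dfun_pos_and_abs_Ffun_le hlam hρ rfl rfl
    (fun m hm => (hN m (by have := hm.1; omega)).1 _ ⟨by positivity, hyM⟩)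
    (fun m hm => (hN m (by have := hm.1; omega)).2.1 _ ⟨by positivity, hxM⟩) h24
  refine ⟨hD, hF.trans ?_⟩
  gcongr
end

section
/- Let ℓ ≥ 1 be an integer and a, ρ > 0 with J_{ℓ−1}(aρ) = 0 and J_ℓ(aρ) ≠ 0. For real λ > 0 set μ(λ) = √(λ² + a²) and A_ℓ(λ) = −(λ/μ(λ))·J_ℓ(μ(λ)ρ)/J_ℓ′(μ(λ)ρ) (which is defined for all sufficiently small λ > 0, since J_ℓ′(aρ) = −(ℓ/(aρ))·J_ℓ(aρ) ≠ 0). Then, as λ ↓ 0, A_ℓ(λ) = λρ/ℓ − (λρ)³/(2ℓ²) + O(λ⁵). -/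
open scoped Real Topology
open Filter Asymptotics

/-! Write `ℓ = m + 1` and `q(x) = x J_m(x) / J_ℓ(x)`. The recurrence `J_ℓ' = J_m - (ℓ/x) J_ℓ`
turns `A_ℓ(λ)` into `λ ρ / (ℓ - q(ρ √(λ² + a²)))`, i.e. `λ` times a smooth function of `t = λ²`.
Since `J_m(aρ) = 0`, `q` vanishes at `aρ` with `q'(aρ) = -aρ`, and the first-order Taylor
expansion in `t`, with its `O(t²)` remainder, gives the claim. -/

open scoped Nat

section FactorialSeries

variable {c : ℕ → ℝ}

theorem summable_mul_pow_of_abs_le_inv_factorial (hc : ∀ k, |c k| ≤ (k ! : ℝ)⁻¹) (u : ℝ) :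
    Summable fun k => c k * u ^ k := by
  refine .of_norm_bounded (Real.summable_pow_div_factorial |u|) fun k => ?_
  rw [norm_mul, norm_pow, Real.norm_eq_abs, Real.norm_eq_abs, div_eq_inv_mul]
  gcongr
  exact hc k

theorem hasDerivAt_tsum_mul_pow_of_abs_le_inv_factorial (hc : ∀ k, |c k| ≤ (k ! : ℝ)⁻¹)
    (u : ℝ) :
    HasDerivAt (fun u => ∑' k, c k * u ^ k) (∑' k, c (k + 1) * (k + 1) * u ^ k) u := by
  set R := |u| + 1
  have hbound : Summable fun k : ℕ => (k : ℝ) * R ^ (k - 1) / k ! := by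
    refine (summable_nat_add_iff 1).1 <| (Real.summable_pow_div_factorial R).congr fun k => ?_
    rw [Nat.add_sub_cancel, Nat.factorial_succ]
    push_cast
    field_simp
  have hle : ∀ k (y : ℝ), |y| ≤ R → ‖c k * (k * y ^ (k - 1))‖ ≤ k * R ^ (k - 1) / k ! := by
    intro k y hy
    rw [norm_mul, norm_mul, norm_pow, Real.norm_eq_abs, Real.norm_eq_abs, Real.norm_eq_abs,
      Nat.abs_cast, div_eq_inv_mul]
    gcongr
    exact hc k
  have hu : |u| ≤ R := by simp [R]
  have hderiv := hasDerivAt_tsum_of_isPreconnected (y₀ := 0) hbound Metric.isOpen_ball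
    (convex_ball (0 : ℝ) R).isPreconnected
    (fun k y _ => (hasDerivAt_pow k y).const_mul (c k))
    (fun k y hy => hle k y (by rw [mem_ball_zero_iff, Real.norm_eq_abs] at hy; exact hy.le))
    (Metric.mem_ball_self (by positivity)) (summable_mul_pow_of_abs_le_inv_factorial hc 0)
    (show u ∈ Metric.ball 0 R by simp [R])
  refine hderiv.congr_deriv ?_
  rw [Summable.tsum_eq_zero_add (.of_norm_bounded hbound fun k => hle k u hu)]
  simp only [CharP.cast_eq_zero, zero_mul, mul_zero, zero_add, Nat.add_sub_cancel]
  exact tsum_congr fun k => by push_cast; ring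

end FactorialSeries

noncomputable def besselCoeff (m k : ℕ) : ℝ := (-1) ^ k / ((k ! : ℝ) * ((k + m)! : ℝ))

noncomputable def besselEntire (m : ℕ) (u : ℝ) : ℝ := ∑' k, besselCoeff m k * u ^ k

theorem abs_besselCoeff_le (m k : ℕ) : |besselCoeff m k| ≤ (k ! : ℝ)⁻¹ := by
  rw [besselCoeff, abs_div, abs_pow, abs_neg, abs_one, one_pow, abs_of_pos (by positivity),
    one_div]
  gcongr
  exact le_mul_of_one_le_right (by positivity) (by exact_mod_cast (k + m).factorial_pos)

theorem besselCoeff_succ_mul (m k : ℕ) :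
    besselCoeff m (k + 1) * (k + 1) = -besselCoeff (m + 1) k := by
  rw [besselCoeff, besselCoeff, show k + 1 + m = k + (m + 1) by omega, Nat.factorial_succ]
  push_cast
  field_simp
  ring

theorem besselCoeff_zero (m : ℕ) : besselCoeff m 0 = (m + 1) * besselCoeff (m + 1) 0 := by
  simp only [besselCoeff, zero_add, Nat.factorial_succ m]
  push_cast
  field_simp

theorem besselCoeff_succ_add (m k : ℕ) :
    besselCoeff m (k + 1) + besselCoeff (m + 2) k = (m + 1) * besselCoeff (m + 1) (k + 1) := by
  simp only [besselCoeff, show k + 1 + m = k + m + 1 by omega,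
    show k + (m + 2) = k + m + 1 + 1 by omega, show k + 1 + (m + 1) = k + m + 1 + 1 by omega,
    Nat.factorial_succ (k + m + 1), Nat.factorial_succ k]
  push_cast
  field_simp
  ring

theorem summable_besselCoeff_mul_pow (m : ℕ) (u : ℝ) :
    Summable fun k => besselCoeff m k * u ^ k :=
  summable_mul_pow_of_abs_le_inv_factorial (abs_besselCoeff_le m) u

theorem hasDerivAt_besselEntire (m : ℕ) (u : ℝ) :
    HasDerivAt (besselEntire m) (-besselEntire (m + 1) u) u := by
  refine (hasDerivAt_tsum_mul_pow_of_abs_le_inv_factorial (abs_besselCoeff_le m) u).congr_deriv ?_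
  rw [besselEntire, ← tsum_neg]
  exact tsum_congr fun k => by rw [besselCoeff_succ_mul]; ring

theorem contDiff_besselEntire (n : ℕ) (m : ℕ) : ContDiff ℝ n (besselEntire m) := by
  induction n generalizing m with
  | zero =>
    exact contDiff_zero.2 (continuous_iff_continuousAt.2 fun u =>
      (hasDerivAt_besselEntire m u).continuousAt)
  | succ n ih =>
    rw [Nat.cast_succ, contDiff_succ_iff_deriv]
    refine ⟨fun u => (hasDerivAt_besselEntire m u).differentiableAt, by simp, ?_⟩
    rw [show deriv (besselEntire m) = fun u => -besselEntire (m + 1) u from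
      funext fun u => (hasDerivAt_besselEntire m u).deriv]
    exact (ih (m + 1)).neg

theorem besselEntire_add_mul (m : ℕ) (u : ℝ) :
    besselEntire m u + u * besselEntire (m + 2) u = (m + 1) * besselEntire (m + 1) u := by
  have hshift : Summable fun k => besselCoeff m (k + 1) * u ^ (k + 1) :=
    (summable_nat_add_iff 1).2 (summable_besselCoeff_mul_pow m u)
  simp only [besselEntire]
  rw [(summable_besselCoeff_mul_pow m u).tsum_eq_zero_add,
    (summable_besselCoeff_mul_pow (m + 1) u).tsum_eq_zero_add, ← tsum_mul_left, add_assoc,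
    ← hshift.tsum_add ((summable_besselCoeff_mul_pow (m + 2) u).mul_left u), mul_add,
    ← tsum_mul_left, besselCoeff_zero]
  congr 1
  · ring
  · exact tsum_congr fun k => by linear_combination u ^ (k + 1) * besselCoeff_succ_add m k

theorem besselJr_eq_mul_besselEntire (m : ℕ) (x : ℝ) :
    besselJr m x = (x / 2) ^ m * besselEntire m ((x / 2) ^ 2) := by
  rw [besselJr, besselEntire, ← tsum_mul_left]
  exact tsum_congr fun k => by rw [besselCoeff, pow_add, pow_mul]; ring

theorem contDiff_besselJr (n : ℕ) (m : ℕ) : ContDiff ℝ n (besselJr m) := by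
  rw [funext (besselJr_eq_mul_besselEntire m)]
  have := contDiff_besselEntire n m
  fun_prop

theorem hasDerivAt_besselJr (m : ℕ) {x : ℝ} (hx : x ≠ 0) :
    HasDerivAt (besselJr m) (m / x * besselJr m x - besselJr (m + 1) x) x := by
  have hhalf : HasDerivAt (fun y : ℝ => y / 2) (1 / 2) x := (hasDerivAt_id x).div_const 2
  have hprod := ((hasDerivAt_pow m (x / 2)).comp x hhalf).mul
    ((hasDerivAt_besselEntire m _).comp x ((hasDerivAt_pow 2 (x / 2)).comp x hhalf))
  refine (hprod.congr_of_eventuallyEq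
    (.of_forall fun y => besselJr_eq_mul_besselEntire m y)).congr_deriv ?_
  simp only [besselJr_eq_mul_besselEntire, Function.comp_apply]
  rcases m with _ | m
  · push_cast
    ring
  · simp only [Nat.add_sub_cancel, pow_succ]
    push_cast
    field_simp
    ring

theorem besselJr_add_besselJr_add_two (m : ℕ) {x : ℝ} (hx : x ≠ 0) :
    besselJr m x + besselJr (m + 2) x = 2 * (m + 1) / x * besselJr (m + 1) x := by
  simp only [besselJr_eq_mul_besselEntire]
  calc (x / 2) ^ m * besselEntire m ((x / 2) ^ 2)
        + (x / 2) ^ (m + 2) * besselEntire (m + 2) ((x / 2) ^ 2)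
      = (x / 2) ^ m * (besselEntire m ((x / 2) ^ 2)
          + (x / 2) ^ 2 * besselEntire (m + 2) ((x / 2) ^ 2)) := by ring
    _ = 2 * (m + 1) / x * ((x / 2) ^ (m + 1) * besselEntire (m + 1) ((x / 2) ^ 2)) := by
      rw [besselEntire_add_mul, pow_succ]
      field_simp
      ring

theorem hasDerivAt_besselJr_succ (m : ℕ) {x : ℝ} (hx : x ≠ 0) :
    HasDerivAt (besselJr (m + 1)) (besselJr m x - (m + 1) / x * besselJr (m + 1) x) x := by
  refine (hasDerivAt_besselJr (m + 1) hx).congr_deriv ?_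
  have hrec := besselJr_add_besselJr_add_two m hx
  push_cast
  linear_combination -hrec

theorem ContDiffAt.isBigO_sub_sub_smul_deriv {E : Type*} [NormedAddCommGroup E]
    [NormedSpace ℝ E] {f : ℝ → E} {x₀ : ℝ} (hf : ContDiffAt ℝ 2 f x₀) :
    (fun x => f x - f x₀ - (x - x₀) • deriv f x₀) =O[𝓝 x₀] fun x => (x - x₀) ^ 2 := by
  have hderiv : ∀ᶠ x in 𝓝 x₀, HasDerivAt f (deriv f x) x :=
    (hf.eventually (by simp)).mono fun x hx => (hx.differentiableAt (by simp)).hasDerivAt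
  obtain ⟨C, hC, hCbound⟩ :=
    ((hf.derivWithin (m := 1) (by norm_num)).differentiableAt one_ne_zero).isBigO_sub.exists_nonneg
  obtain ⟨δ, hδ, hball⟩ := Metric.eventually_nhds_iff_ball.1 (hderiv.and hCbound.bound)
  refine .of_bound C ?_
  filter_upwards [Metric.ball_mem_nhds x₀ hδ] with x hx
  rw [Metric.mem_ball, Real.dist_eq] at hx
  have hsub : Metric.closedBall x₀ |x - x₀| ⊆ Metric.ball x₀ δ :=
    Metric.closedBall_subset_ball hx
  have hmvt := (convex_closedBall x₀ |x - x₀|).norm_image_sub_le_of_norm_hasDerivWithin_le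
    (f := fun y => f y - (y - x₀) • deriv f x₀) (f' := fun y => deriv f y - deriv f x₀)
    (C := C * |x - x₀|) (x := x₀) (y := x)
    (fun y hy => (((hball y (hsub hy)).1.sub
      (((hasDerivAt_id y).sub_const x₀).smul_const (deriv f x₀))).congr_deriv
      (by simp)).hasDerivWithinAt)
    (fun y hy => (hball y (hsub hy)).2.trans (by
      rw [Metric.mem_closedBall, Real.dist_eq] at hy
      rw [Real.norm_eq_abs]
      gcongr))
    (Metric.mem_closedBall_self (abs_nonneg _)) (by simp [Real.dist_eq])
  simp only [sub_self, zero_smul, sub_zero, Real.norm_eq_abs] at hmvt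
  rwa [norm_pow, Real.norm_eq_abs, sq, ← mul_assoc, sub_right_comm]

noncomputable def besselQuotient (m : ℕ) (x : ℝ) : ℝ := x * besselJr m x / besselJr (m + 1) x

theorem hasDerivAt_besselQuotient_of_besselJr_eq_zero {m : ℕ} {x : ℝ} (hx : x ≠ 0)
    (h0 : besselJr m x = 0) (hne : besselJr (m + 1) x ≠ 0) :
    HasDerivAt (besselQuotient m) (-x) x := by
  refine (((hasDerivAt_id' x).fun_mul (hasDerivAt_besselJr m hx)).fun_div
    (hasDerivAt_besselJr (m + 1) hx) hne).congr_deriv ?_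
  rw [h0]
  field_simp
  ring

-- `A_ℓ(λ) = λ · reducedA (ℓ - 1) a ρ (λ ^ 2)`, see `neg_div_sqrt_mul_besselJr_div_deriv_eq`.
noncomputable def reducedA (m : ℕ) (a ρ t : ℝ) : ℝ :=
  ρ / (m + 1 - besselQuotient m (√(t + a ^ 2) * ρ))

section ReducedA

variable {m : ℕ} {a ρ : ℝ}

theorem reducedA_zero (ha : 0 < a) (h0 : besselJr m (a * ρ) = 0) :
    reducedA m a ρ 0 = ρ / (m + 1) := by
  simp [reducedA, besselQuotient, Real.sqrt_sq ha.le, h0]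

theorem contDiffAt_reducedA (n : ℕ) (ha : 0 < a) (h0 : besselJr m (a * ρ) = 0)
    (hne : besselJr (m + 1) (a * ρ) ≠ 0) : ContDiffAt ℝ n (reducedA m a ρ) 0 := by
  have hs : ContDiffAt ℝ n (fun t => √(t + a ^ 2) * ρ) 0 :=
    ((contDiffAt_id.add contDiffAt_const).sqrt (by simp [ha.ne'])).mul contDiffAt_const
  have hq : ContDiffAt ℝ n (besselQuotient m) (√(0 + a ^ 2) * ρ) := by
    rw [zero_add, Real.sqrt_sq ha.le]
    exact (contDiffAt_id.mul (contDiff_besselJr n m).contDiffAt).div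
      (contDiff_besselJr n (m + 1)).contDiffAt hne
  have hqs := hq.comp (0 : ℝ) hs
  exact contDiffAt_const.div (contDiffAt_const.sub hqs)
    (by simp [besselQuotient, Real.sqrt_sq ha.le, h0]; positivity)

theorem hasDerivAt_reducedA (ha : 0 < a) (hρ : 0 < ρ) (h0 : besselJr m (a * ρ) = 0)
    (hne : besselJr (m + 1) (a * ρ) ≠ 0) :
    HasDerivAt (reducedA m a ρ) (-ρ ^ 3 / (2 * (m + 1) ^ 2)) 0 := by
  have hs : HasDerivAt (fun t => √(t + a ^ 2) * ρ) (1 / (2 * a) * ρ) 0 := by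
    have := ((hasDerivAt_id (0 : ℝ)).add_const (a ^ 2)).sqrt (by simp [ha.ne'])
    simpa [Real.sqrt_sq ha.le] using this.mul_const ρ
  have hq := (hasDerivAt_besselQuotient_of_besselJr_eq_zero (by positivity) h0 hne).comp_of_eq 0 hs
    (by simp [Real.sqrt_sq ha.le])
  refine ((hasDerivAt_const 0 ρ).fun_div (hq.const_sub ((m : ℝ) + 1))
    (by simp [besselQuotient, Real.sqrt_sq ha.le, h0]; positivity)).congr_deriv ?_
  simp only [Function.comp_apply, zero_add, Real.sqrt_sq ha.le, besselQuotient, h0]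
  field_simp
  ring

theorem neg_div_sqrt_mul_besselJr_div_deriv_eq (ha : 0 < a) (hρ : 0 < ρ) (lam : ℝ)
    (hne : besselJr (m + 1) (√(lam ^ 2 + a ^ 2) * ρ) ≠ 0) :
    -(lam / √(lam ^ 2 + a ^ 2)) * besselJr (m + 1) (√(lam ^ 2 + a ^ 2) * ρ)
      / deriv (besselJr (m + 1)) (√(lam ^ 2 + a ^ 2) * ρ) = lam * reducedA m a ρ (lam ^ 2) := by
  have hσ : 0 < √(lam ^ 2 + a ^ 2) := Real.sqrt_pos.2 (by positivity)
  rw [(hasDerivAt_besselJr_succ m (by positivity)).deriv, reducedA, besselQuotient]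
  set σ := √(lam ^ 2 + a ^ 2)
  set J := besselJr (m + 1) (σ * ρ)
  set d := (m + 1) * J - σ * ρ * besselJr m (σ * ρ)
  rw [show besselJr m (σ * ρ) - (m + 1) / (σ * ρ) * J = -d / (σ * ρ) by field_simp; ring,
    show (m + 1 : ℝ) - σ * ρ * besselJr m (σ * ρ) / J = d / J by field_simp; ring]
  rcases eq_or_ne d 0 with hd | hd
  · simp [hd]
  · field_simp

end ReducedA

/-- expansion of `A_ℓ(λ)` when `J_{ℓ-1}(aρ) = 0`. -/
theorem stmt_14 (ℓ : ℕ) (hℓ : 1 ≤ ℓ) (a ρ : ℝ) (ha : 0 < a) (hρ : 0 < ρ)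
    (hJ1 : besselJr (ℓ-1) (a*ρ) = 0) (hJ2 : besselJr ℓ (a*ρ) ≠ 0) :
    deriv (besselJr ℓ) (a*ρ) = -((ℓ:ℝ)/(a*ρ)) * besselJr ℓ (a*ρ) ∧
    (fun lam : ℝ =>
        (-(lam / Real.sqrt (lam^2+a^2)) * besselJr ℓ (Real.sqrt (lam^2+a^2) * ρ)
            / deriv (besselJr ℓ) (Real.sqrt (lam^2+a^2) * ρ))
          - (lam*ρ/(ℓ:ℝ) - (lam*ρ)^3/(2*(ℓ:ℝ)^2)))
      =O[nhdsWithin 0 (Set.Ioi 0)] (fun lam : ℝ => lam^5) := by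
  obtain ⟨m, rfl⟩ : ∃ m, ℓ = m + 1 := ⟨ℓ - 1, by omega⟩
  rw [Nat.add_sub_cancel] at hJ1
  push_cast
  refine ⟨(hasDerivAt_besselJr_succ m (by positivity)).deriv.trans (by rw [hJ1]; ring), ?_⟩
  have hsq : Tendsto (fun lam : ℝ => lam ^ 2) (𝓝 0) (𝓝 0) :=
    (continuous_pow 2).tendsto' 0 0 (zero_pow two_ne_zero)
  have hnonzero : ∀ᶠ lam in 𝓝 (0 : ℝ), besselJr (m + 1) (√(lam ^ 2 + a ^ 2) * ρ) ≠ 0 := by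
    have hcont : ContinuousAt (fun lam : ℝ => besselJr (m + 1) (√(lam ^ 2 + a ^ 2) * ρ)) 0 := by
      have := (contDiff_besselJr 0 (m + 1)).continuous
      fun_prop
    exact hcont.eventually_ne (by simpa [Real.sqrt_sq ha.le] using hJ2)
  have hTaylor := (contDiffAt_reducedA 2 ha hJ1 hJ2).isBigO_sub_sub_smul_deriv
  rw [(hasDerivAt_reducedA ha hρ hJ1 hJ2).deriv, reducedA_zero ha hJ1] at hTaylor
  refine IsBigO.mono ?_ nhdsWithin_le_nhds
  calc _ =ᶠ[𝓝 0] fun lam : ℝ => lam * (reducedA m a ρ (lam ^ 2) - ρ / (m + 1)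
          - (lam ^ 2 - 0) • (-ρ ^ 3 / (2 * (m + 1) ^ 2))) := by
        filter_upwards [hnonzero] with lam hlam
        rw [neg_div_sqrt_mul_besselJr_div_deriv_eq ha hρ lam hlam, smul_eq_mul]
        field_simp
        ring
    _ =O[𝓝 0] fun lam : ℝ => lam * (lam ^ 2 - 0) ^ 2 :=
        (isBigO_refl _ _).mul (hTaylor.comp_tendsto hsq)
    _ = fun lam : ℝ => lam ^ 5 := by
        funext lam
        ring
end
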